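/- Let K ⊆ ℝ² be a region transverse to the verticals (every nonempty intersection with a vertical line is connected), triangulated by finitely many affine 2-simplices. Let f : K → ℝ² be a simplexwise-linear map that is vertical (each vertex (x,y) is sent to a point (x, y') with the same first coordinate). If the signed area of f(τ) is strictly positive for every 2-simplex τ of K, then f is injective. -/

import Mathlib

/-- Vertex set of an ordered triangle. -/
def vset {ι : Type} [DecidableEq ι] (t : ι × ι × ι) : Finset ι := {t.1, t.2.1, t.2.2}

/-- The geometric (closed, filled) triangle spanned by an ordered triple of vertices. -/
def triSet {ι : Type} (pos : ι → ℝ × ℝ) (t : ι × ι × ι) : Set (ℝ × ℝ) :=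
  convexHull ℝ {pos t.1, pos t.2.1, pos t.2.2}

/-- Twice the signed area of the ordered triangle `p q r`. -/
def ori (p q r : ℝ × ℝ) : ℝ :=
  (q.1 - p.1) * (r.2 - p.2) - (r.1 - p.1) * (q.2 - p.2)

/-- A region of the plane triangulated by finitely many affine 2-simplices. -/
structure TriRegion (ι : Type) [Fintype ι] [DecidableEq ι] where
  pos : ι → ℝ × ℝ
  inj : Function.Injective pos
  tris : Finset (ι × ι × ι)
  nonempty : tris.Nonempty
  indep : ∀ t ∈ tris, AffineIndependent ℝ ![pos t.1, pos t.2.1, pos t.2.2]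
  glue : ∀ s ∈ tris, ∀ t ∈ tris,
    triSet pos s ∩ triSet pos t = convexHull ℝ (pos '' ((vset s ∩ vset t : Finset ι) : Set ι))

namespace TriRegion

variable {ι : Type} [Fintype ι] [DecidableEq ι]

/-- The underlying space. -/
def space (D : TriRegion ι) : Set (ℝ × ℝ) := ⋃ t ∈ D.tris, triSet D.pos t

/-- Transverse to the verticals. -/
def TrV (D : TriRegion ι) : Prop :=
  ∀ c : ℝ, IsPreconnected (D.space ∩ {p : ℝ × ℝ | p.1 = c})

/-- Simplexwise linear on the region. -/
def SLOn (D : TriRegion ι) (F : ℝ × ℝ → ℝ × ℝ) : Prop :=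
  ∀ t ∈ D.tris, ∃ g : (ℝ × ℝ) →ᵃ[ℝ] (ℝ × ℝ), Set.EqOn F g (triSet D.pos t)

end TriRegion

/-! On a vertical line `x = c`, each affine piece `g` of `F` moves `y` at rate `(g.linear (0, 1)).2`,
which for a vertical map is the ratio of the signed areas of `g(τ)` and `τ`, hence positive. So
`y ↦ (F (c, y)).2` is strictly increasing on every piece of the fibre over `c`; these pieces are closed
and finitely many, and the fibre is an interval by transversality, so it is strictly increasing on the
whole fibre, which makes `F` injective. -/

open Set

/-- The induction is on the number of pieces: if `d` is the largest point of `[a, b]` in the piece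
containing `a`, then `(d, b]` avoids that piece, and so, the pieces being closed, does `[d, b]`. -/
theorem Set.OrdConnected.strictMonoOn_of_isClosed_cover
    {α β γ : Type*} [ConditionallyCompleteLinearOrder α] [TopologicalSpace α] [OrderTopology α]
    [DenselyOrdered α] [Preorder γ] {f : α → γ} {s : Set α} (hs : s.OrdConnected)
    (T : Finset β) (P : β → Set α) (hcover : s ⊆ ⋃ i ∈ T, P i)
    (hclosed : ∀ i ∈ T, IsClosed (P i)) (hmono : ∀ i ∈ T, StrictMonoOn f (P i)) :
    StrictMonoOn f s := by
  classical
  induction T using Finset.strongInduction generalizing s with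
  | H T ih =>
  intro a ha b hb hab
  obtain ⟨i, hi, hai⟩ := mem_iUnion₂.mp (hcover ha)
  set d := sSup (P i ∩ Icc a b)
  have hd : d ∈ P i ∩ Icc a b :=
    ((hclosed i hi).inter isClosed_Icc).csSup_mem ⟨a, hai, left_mem_Icc.2 hab.le⟩
      (bddAbove_Icc.mono inter_subset_right)
  have had : f a ≤ f d := (hmono i hi).monotoneOn hai hd.1 hd.2.1
  rcases hd.2.2.eq_or_lt with hdb | hdb
  · exact (hmono i hi) hai (hdb ▸ hd.1) hab
  have hrest : Icc d b ⊆ ⋃ j ∈ T.erase i, P j := by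
    rw [← closure_Ioc hdb.ne]
    refine closure_minimal (fun x hx => ?_)
      (isClosed_biUnion_finset fun j hj => hclosed j (Finset.mem_of_mem_erase hj))
    have hxab : x ∈ Icc a b := ⟨hd.2.1.trans hx.1.le, hx.2⟩
    obtain ⟨j, hj, hxj⟩ := mem_iUnion₂.mp (hcover (hs.out ha hb hxab))
    have hji : j ≠ i := by
      rintro rfl
      exact hx.1.not_ge (le_csSup (bddAbove_Icc.mono inter_subset_right) ⟨hxj, hxab⟩)
    exact mem_biUnion (Finset.mem_erase.mpr ⟨hji, hj⟩) hxj
  have hdb' : f d < f b :=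
    ih (T.erase i) (Finset.erase_ssubset hi) ordConnected_Icc hrest
      (fun j hj => hclosed j (Finset.mem_of_mem_erase hj))
      (fun j hj => hmono j (Finset.mem_of_mem_erase hj))
      (left_mem_Icc.2 hdb.le) (right_mem_Icc.2 hdb.le) hdb
  exact had.trans_lt hdb'

theorem IsPreconnected.ordConnected_preimage_prodMk {S : Set (ℝ × ℝ)} {c : ℝ}
    (hS : IsPreconnected (S ∩ {p | p.1 = c})) : (Prod.mk c ⁻¹' S).OrdConnected := by
  have himage : Prod.mk c ⁻¹' S = Prod.snd '' (S ∩ {p | p.1 = c}) := by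
    ext y
    constructor
    · exact fun hy => ⟨(c, y), ⟨hy, rfl⟩, rfl⟩
    · rintro ⟨⟨x, y⟩, ⟨hxy, rfl : x = c⟩, rfl⟩
      exact hxy
  rw [himage]
  exact (hS.image _ continuous_snd.continuousOn).ordConnected

theorem AffineMap.sub_eq_fst_sub_smul_add_snd_sub_smul (g : (ℝ × ℝ) →ᵃ[ℝ] (ℝ × ℝ)) (p q : ℝ × ℝ) :
    g p - g q = (p.1 - q.1) • g.linear (1, 0) + (p.2 - q.2) • g.linear (0, 1) := by
  have hpq : p - q = (p.1 - q.1) • ((1 : ℝ), (0 : ℝ)) + (p.2 - q.2) • ((0 : ℝ), (1 : ℝ)) := by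
    simp [Prod.ext_iff]
  rw [← vsub_eq_sub (g p), ← g.linearMap_vsub, vsub_eq_sub, hpq, map_add, map_smul, map_smul]

/-- For an affine map preserving first coordinates, `(g.linear (0, 1)).2` is its determinant. -/
theorem ori_map_of_fst_eq (g : (ℝ × ℝ) →ᵃ[ℝ] (ℝ × ℝ)) {p q r : ℝ × ℝ}
    (hp : (g p).1 = p.1) (hq : (g q).1 = q.1) (hr : (g r).1 = r.1) :
    ori (g p) (g q) (g r) = (g.linear (0, 1)).2 * ori p q r := by
  have hqp := congrArg Prod.snd (g.sub_eq_fst_sub_smul_add_snd_sub_smul q p)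
  have hrp := congrArg Prod.snd (g.sub_eq_fst_sub_smul_add_snd_sub_smul r p)
  simp only [Prod.snd_add, Prod.snd_sub, Prod.smul_snd, smul_eq_mul] at hqp hrp
  unfold ori
  rw [hp, hq, hr]
  linear_combination (q.1 - p.1) * hrp - (r.1 - p.1) * hqp

theorem AffineMap.strictMono_snd_prodMk (g : (ℝ × ℝ) →ᵃ[ℝ] (ℝ × ℝ))
    (hg : 0 < (g.linear (0, 1)).2) (c : ℝ) : StrictMono fun y => (g (c, y)).2 := by
  intro y₁ y₂ hy
  have h := congrArg Prod.snd (g.sub_eq_fst_sub_smul_add_snd_sub_smul (c, y₂) (c, y₁))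
  simp only [Prod.snd_add, Prod.snd_sub, Prod.smul_snd, smul_eq_mul, sub_self, zero_mul,
    zero_add] at h
  nlinarith

theorem strictMonoOn_snd_prodMk_convexHull {F : ℝ × ℝ → ℝ × ℝ} {p q r : ℝ × ℝ}
    (g : (ℝ × ℝ) →ᵃ[ℝ] (ℝ × ℝ)) (hg : EqOn F g (convexHull ℝ {p, q, r}))
    (hp : (F p).1 = p.1) (hq : (F q).1 = q.1) (hr : (F r).1 = r.1)
    (horient : 0 < ori p q r) (hpos : 0 < ori (F p) (F q) (F r)) (c : ℝ) :
    StrictMonoOn (fun y => (F (c, y)).2) (Prod.mk c ⁻¹' convexHull ℝ {p, q, r}) := by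
  have hFg : ∀ v ∈ ({p, q, r} : Set (ℝ × ℝ)), F v = g v := fun v hv =>
    hg (subset_convexHull ℝ _ hv)
  simp only [hFg p (by simp), hFg q (by simp), hFg r (by simp)] at hp hq hr hpos
  rw [ori_map_of_fst_eq g hp hq hr] at hpos
  intro y₁ hy₁ y₂ hy₂ hy
  simp only [hg hy₁, hg hy₂]
  exact g.strictMono_snd_prodMk (pos_of_mul_pos_left hpos horient.le) c hy

/-- **Lemma 2, injectivity part.** Let `K ⊆ ℝ²` be a finitely
triangulated region transverse to the verticals and `F` a vertical simplexwise
linear map on `K` (preserving first coordinates). If the signed area of `F(τ)` is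
strictly positive for every positively oriented 2-simplex `τ` of `K`, then `F` is
injective on `K`. -/
theorem vertical_SL_positive_areas_injective
    {ι : Type} [Fintype ι] [DecidableEq ι]
    (D : TriRegion ι) (hTrV : D.TrV)
    (F : ℝ × ℝ → ℝ × ℝ)
    (hSL : D.SLOn F)
    (hvert : ∀ p ∈ D.space, (F p).1 = p.1)
    (horient : ∀ t ∈ D.tris, 0 < ori (D.pos t.1) (D.pos t.2.1) (D.pos t.2.2))
    (hpos : ∀ t ∈ D.tris,
      0 < ori (F (D.pos t.1)) (F (D.pos t.2.1)) (F (D.pos t.2.2))) :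
    Set.InjOn F D.space := by
  intro p hp q hq hFpq
  have hx : p.1 = q.1 := by rw [← hvert p hp, ← hvert q hq, hFpq]
  have hmono : StrictMonoOn (fun y => (F (p.1, y)).2) (Prod.mk p.1 ⁻¹' D.space) := by
    refine (hTrV p.1).ordConnected_preimage_prodMk.strictMonoOn_of_isClosed_cover D.tris
      (fun t => Prod.mk p.1 ⁻¹' triSet D.pos t) (by simp [TriRegion.space])
      (fun t _ => ((Set.toFinite _).isCompact_convexHull (𝕜 := ℝ)).isClosed.preimage
        (Continuous.prodMk_right _)) fun t ht => ?_
    obtain ⟨g, hg⟩ := hSL t ht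
    have hvertex : ∀ v ∈ ({D.pos t.1, D.pos t.2.1, D.pos t.2.2} : Set (ℝ × ℝ)), (F v).1 = v.1 :=
      fun v hv => hvert v (mem_biUnion ht (subset_convexHull ℝ _ hv))
    exact strictMonoOn_snd_prodMk_convexHull g hg (hvertex _ (by simp)) (hvertex _ (by simp))
      (hvertex _ (by simp)) (horient t ht) (hpos t ht) p.1
  have hq' : (p.1, q.2) = q := Prod.ext hx rfl
  have hy : p.2 = q.2 := hmono.injOn hp (by rwa [mem_preimage, hq'])
    (show (F p).2 = (F (p.1, q.2)).2 by rw [hq', hFpq])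
  exact Prod.ext hx hy
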